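/- arXiv:1505.02334 — 2 statements merged into one kernel-verified Lean document; each statement's English description precedes it below -/
import Mathlib

section
/- Let φ : ℝᵐ → (-∞, +∞] be proper, convex, lower semicontinuous and let φ^α(x) = inf_{y∈ℝᵐ} { φ(y) + |y - x|²/(2α) } be its Moreau–Yosida regularization. Suppose φ_ε is a family of proper convex lsc functions with φ_ε(x) → φ(x) pointwise as ε↓0 for every x in the common domain D, all φ_ε having domain D. Then for every α > 0 and every x, lim_{ε↓0} φ_ε^α(x) = φ^α(x). -/
open scoped RealInnerProductSpace

/-- Moreau–Yosida regularization of an extended-real-valued function. -/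
noncomputable def moreauEnv {m : ℕ} (φ : EuclideanSpace ℝ (Fin m) → EReal) (α : ℝ)
    (x : EuclideanSpace ℝ (Fin m)) : EReal :=
  ⨅ y, φ y + ((‖y - x‖ ^ 2 / (2 * α) : ℝ) : EReal)

/-!
The upper bound `limsup φ_ε^α(x) ≤ φ^α(x)` only needs convergence at one near-minimiser. The lower
bound rests on a locally uniform liminf inequality: if `c < φ(y₀)`, then `c ≤ φ_ε(y)` for all `y`
near `y₀` and all small `ε`. Convergence at the vertices of a small simplex around a relative
interior point `w` of `D` bounds every `φ_ε` above by one constant `M` near `w`. A point `z` close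
to `y₀` on a segment towards `w` has `φ(z) > b > c`, hence `φ_ε(z) > b`; writing
`z = (1 - θ) y + θ z'` with `z'` near `w` then gives `φ_ε(y) ≥ (b - θ M) / (1 - θ)`, which is
`≥ c` for `θ` small. Compactness makes this uniform on a large ball, and outside it the affine
minorant plus the quadratic term exceeds the level.
-/

open Filter Set Topology Metric

theorem eventually_iInf_add_lt {X ι : Type*} {l : Filter ι} {f : ι → X → EReal} {g : X → EReal}
    (hlim : ∀ x, g x < ⊤ → Tendsto (f · x) l (𝓝 (g x))) (q : X → ℝ) {t : EReal}
    (ht : ⨅ y, g y + q y < t) : ∀ᶠ i in l, ⨅ y, f i y + q y < t := by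
  obtain ⟨y, hy⟩ := iInf_lt_iff.1 ht
  have hgy : g y < ⊤ := by
    by_contra h
    rw [not_lt_top_iff.1 h, EReal.top_add_coe] at hy
    exact not_top_lt hy
  have hadd : Tendsto (fun i => f i y + q y) l (𝓝 (g y + q y)) :=
    (EReal.continuousAt_add (p := (g y, q y)) (.inr (EReal.coe_ne_bot _))
      (.inr (EReal.coe_ne_top _))).tendsto.comp ((hlim y hgy).prodMk_nhds tendsto_const_nhds)
  exact (hadd.eventually (gt_mem_nhds hy)).mono fun i hi => (iInf_le _ y).trans_lt hi

theorem eventually_prod_nhds_eq_top {X ι : Type*} [TopologicalSpace X] {l : Filter ι}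
    {f : ι → X → EReal} {D : Set X} (hfD : ∀ᶠ i in l, ∀ x, f i x < ⊤ → x ∈ D) {y₀ : X}
    (hy₀ : y₀ ∉ closure D) : ∀ᶠ z in l ×ˢ 𝓝 y₀, f z.1 z.2 = ⊤ := by
  have hD : ∀ᶠ y in 𝓝 y₀, y ∉ D := Filter.mem_of_superset
    (isClosed_closure.isOpen_compl.mem_nhds hy₀) fun y hy hyD => hy (subset_closure hyD)
  filter_upwards [hfD.prod_inl _, hD.prod_inr _] with z hz hzD
  exact not_lt_top_iff.1 fun h => hzD (hz _ h)

variable {E : Type*} [NormedAddCommGroup E] [NormedSpace ℝ E]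

def ERealConvex (f : E → EReal) : Prop :=
  ∀ (x y : E) (a b : ℝ), 0 ≤ a → 0 ≤ b → a + b = 1 →
    f (a • x + b • y) ≤ (a : EReal) * f x + (b : EReal) * f y

namespace ERealConvex

variable {f : E → EReal}

theorem convex_le (hf : ERealConvex f) (M : ℝ) : Convex ℝ {x | f x ≤ M} := by
  intro x hx y hy a b ha hb hab
  calc f (a • x + b • y) ≤ (a : EReal) * f x + (b : EReal) * f y := hf x y a b ha hb hab
    _ ≤ (a : EReal) * M + (b : EReal) * M :=
      add_le_add (mul_le_mul_of_nonneg_left hx (EReal.coe_nonneg.2 ha))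
        (mul_le_mul_of_nonneg_left hy (EReal.coe_nonneg.2 hb))
    _ = M := by norm_cast; rw [← add_mul, hab, one_mul]

theorem convex_lt_top (hf : ERealConvex f) : Convex ℝ {x | f x < ⊤} := by
  intro x hx y hy a b ha hb hab
  obtain ⟨M, hxyM, -⟩ := EReal.exists_between_coe_real (max_lt hx hy)
  exact (hf.convex_le M ((le_max_left _ _).trans hxyM.le) ((le_max_right _ _).trans hxyM.le)
    ha hb hab).out.trans_lt (EReal.coe_lt_top M)

theorem coe_le_of_lt_combo (hf : ERealConvex f) {y z : E}
    {θ b c M : ℝ} (hθ0 : 0 ≤ θ) (hθ1 : θ ≤ 1) (hz : f z ≤ M)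
    (hb : (b : EReal) < f ((1 - θ) • y + θ • z)) (hcb : (1 - θ) * c + θ * M ≤ b) :
    (c : EReal) ≤ f y := by
  by_contra! hy
  have := calc (b : EReal) < f ((1 - θ) • y + θ • z) := hb
    _ ≤ ((1 - θ : ℝ) : EReal) * f y + (θ : EReal) * f z := hf y z _ _ (by linarith) hθ0 (by ring)
    _ ≤ ((1 - θ : ℝ) : EReal) * c + (θ : EReal) * M :=
      add_le_add (mul_le_mul_of_nonneg_left hy.le (EReal.coe_nonneg.2 (by linarith)))
        (mul_le_mul_of_nonneg_left hz (EReal.coe_nonneg.2 hθ0))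
    _ = ((1 - θ) * c + θ * M : ℝ) := by norm_cast
  exact (EReal.coe_lt_coe_iff.1 this).not_ge hcb

theorem coe_le_of_dist_lt (hf : ERealConvex f) {A : AffineSubspace ℝ E} {p w y : E}
    {θ r b c M : ℝ} (hM : ∀ u ∈ A, dist u w < r → f u ≤ M) (hp : p ∈ A) (hw : w ∈ A)
    (hy : y ∈ A) (hθ0 : 0 < θ) (hθ1 : θ ≤ 1) (hpy : dist p y < θ * r)
    (hb : (b : EReal) < f ((1 - θ) • p + θ • w)) (hcb : (1 - θ) * c + θ * M ≤ b) :
    (c : EReal) ≤ f y := by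
  set z := (θ⁻¹ - 1) • (p - y) + w
  have hz_mem : z ∈ A :=
    AffineSubspace.vadd_mem_of_mem_direction
      (Submodule.smul_mem _ _ (AffineSubspace.vsub_mem_direction hp hy)) hw
  have hz_dist : dist z w < r := by
    have hθinv : 1 ≤ θ⁻¹ := (one_le_inv₀ hθ0).2 hθ1
    rw [dist_eq_norm, add_sub_cancel_right, norm_smul, Real.norm_eq_abs,
      abs_of_nonneg (by linarith), ← dist_eq_norm]
    calc (θ⁻¹ - 1) * dist p y ≤ θ⁻¹ * dist p y := by gcongr; linarith
      _ < θ⁻¹ * (θ * r) := by gcongr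
      _ = r := by field_simp
  have hcombo : (1 - θ) • y + θ • z = (1 - θ) • p + θ • w := by
    simp only [z]
    match_scalars <;> field_simp
    ring
  exact hf.coe_le_of_lt_combo hθ0.le hθ1 (hM z hz_mem hz_dist) (hcombo ▸ hb) hcb

end ERealConvex

theorem exists_convexHull_of_mem_intrinsicInterior [FiniteDimensional ℝ E] {D : Set E} {w : E}
    (hw : w ∈ intrinsicInterior ℝ D) :
    ∃ (n : ℕ) (p : Fin n → E), range p ⊆ D ∧
      ∃ r > 0, ∀ u ∈ affineSpan ℝ D, dist u w < r → u ∈ convexHull ℝ (range p) := by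
  obtain ⟨y, hy, rfl⟩ := mem_intrinsicInterior.1 hw
  let e : (affineSpan ℝ D).direction →ᵃ[ℝ] E :=
    (affineSpan ℝ D).direction.subtype.toAffineMap + AffineMap.const ℝ _ (y : E)
  have he : ∀ v, e v = (v : E) + y := fun v => rfl
  have he_mem : ∀ v, e v ∈ affineSpan ℝ D := fun v =>
    AffineSubspace.vadd_mem_of_mem_direction v.2 y.2
  have hnhds : e ⁻¹' D ∈ 𝓝 0 := by
    have hc : Continuous fun v => (⟨e v, he_mem v⟩ : affineSpan ℝ D) :=
      (continuous_subtype_val.add continuous_const).subtype_mk _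
    have h0 : (⟨e 0, he_mem 0⟩ : affineSpan ℝ D) = y := by ext; simp [he]
    exact hc.continuousAt.preimage_mem_nhds (h0 ▸ mem_interior_iff_mem_nhds.1 hy)
  obtain ⟨b, hb0, hbD⟩ := exists_mem_interior_convexHull_affineBasis hnhds
  obtain ⟨r, hr, hball⟩ := Metric.mem_nhds_iff.1 (mem_interior_iff_mem_nhds.1 hb0)
  refine ⟨_, e ∘ b, ?_, r, hr, fun u hu hur => ?_⟩
  · rw [range_comp, image_subset_iff]
    exact (subset_convexHull ℝ _).trans hbD
  · let v : (affineSpan ℝ D).direction := ⟨u - y, AffineSubspace.vsub_mem_direction hu y.2⟩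
    have hv : v ∈ ball 0 r := by simpa [v, dist_eq_norm] using hur
    have : e v = u := by simp [he, v]
    rw [← this, range_comp, ← e.image_convexHull]
    exact mem_image_of_mem e (hball hv)

section Family

variable {ι : Type*} {l : Filter ι} {f : ι → E → EReal} {g : E → EReal} {D : Set E}

theorem exists_eventually_le_of_mem_intrinsicInterior [FiniteDimensional ℝ E]
    (hf : ∀ᶠ i in l, ERealConvex (f i)) (hgD : ∀ x ∈ D, g x < ⊤)
    (hlim : ∀ x ∈ D, Tendsto (f · x) l (𝓝 (g x))) {w : E} (hw : w ∈ intrinsicInterior ℝ D) :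
    ∃ M : ℝ, ∃ r > 0, ∀ᶠ i in l, ∀ u ∈ affineSpan ℝ D, dist u w < r → f i u ≤ M := by
  obtain ⟨n, p, hpD, r, hr, hhull⟩ := exists_convexHull_of_mem_intrinsicInterior hw
  have hbound : ∀ k, ∃ M : ℝ, ∀ᶠ i in l, f i (p k) ≤ M := fun k => by
    obtain ⟨M, hM, -⟩ := EReal.exists_between_coe_real (hgD _ (hpD (mem_range_self k)))
    exact ⟨M, (hlim _ (hpD (mem_range_self k))).eventually (ge_mem_nhds hM)⟩
  choose M hM using hbound
  obtain ⟨M', hM'⟩ := (finite_range M).bddAbove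
  refine ⟨M', r, hr, ?_⟩
  filter_upwards [hf, eventually_all.2 hM] with i hfi hMi u hu hur
  have hsub : range p ⊆ {x | f i x ≤ M'} := by
    rintro _ ⟨k, rfl⟩
    exact (hMi k).trans (EReal.coe_le_coe_iff.2 (hM' (mem_range_self k)))
  exact convexHull_min hsub (hfi.convex_le M') (hhull u hu hur)

theorem eventually_prod_nhds_coe_le [FiniteDimensional ℝ E] (hDc : Convex ℝ D)
    (hfD : ∀ᶠ i in l, ∀ x, f i x < ⊤ → x ∈ D) (hf : ∀ᶠ i in l, ERealConvex (f i))
    (hgD : ∀ x ∈ D, g x < ⊤) (hg : LowerSemicontinuous g)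
    (hlim : ∀ x ∈ D, Tendsto (f · x) l (𝓝 (g x))) {y₀ : E} {c : ℝ} (hc : (c : EReal) < g y₀) :
    ∀ᶠ z in l ×ˢ 𝓝 y₀, (c : EReal) ≤ f z.1 z.2 := by
  by_cases hy₀ : y₀ ∈ closure D
  swap
  · exact (eventually_prod_nhds_eq_top hfD hy₀).mono fun z hz => hz ▸ le_top
  obtain ⟨w, hw⟩ := (closure_nonempty_iff.1 ⟨y₀, hy₀⟩).intrinsicInterior hDc
  obtain ⟨M, r, hr, hM⟩ := exists_eventually_le_of_mem_intrinsicInterior hf hgD hlim hw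
  obtain ⟨b, hcb, hb⟩ := EReal.exists_between_coe_real hc
  have hstep : ∀ᶠ θ in 𝓝 (0 : ℝ), ∀ᶠ p in 𝓝 y₀, (b : EReal) < g ((1 - θ) • p + θ • w) := by
    have hcont : Continuous fun q : ℝ × E => (1 - q.1) • q.2 + q.1 • w := by fun_prop
    have := (hcont.tendsto' (0, y₀) y₀ (by simp)).eventually (hg y₀ b hb)
    rw [nhds_prod_eq] at this
    exact this.curry
  have hsmall : ∀ᶠ θ in 𝓝 (0 : ℝ), θ < 1 ∧ θ * (M - c) < b - c :=
    (gt_mem_nhds zero_lt_one).and <|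
      ((continuous_id.mul continuous_const).tendsto' 0 0 (by simp)).eventually
        (gt_mem_nhds (sub_pos.2 (EReal.coe_lt_coe_iff.1 hcb)))
  obtain ⟨θ, ⟨hθb, hθ1, hθM⟩, hθ0 : 0 < θ⟩ :=
    (((hstep.and hsmall).filter_mono nhdsWithin_le_nhds).and
      (self_mem_nhdsWithin (s := Ioi 0))).exists
  obtain ⟨p, ⟨hpb, hpy₀⟩, hpD⟩ :=
    ((hθb.and (ball_mem_nhds y₀ (by positivity : 0 < θ * r / 2))).and_frequently
      (mem_closure_iff_frequently.1 hy₀)).exists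
  have hzs : (1 - θ) • p + θ • w ∈ D :=
    hDc hpD (intrinsicInterior_subset hw) (by linarith) hθ0.le (by ring)
  have hzs_lim : ∀ᶠ i in l, (b : EReal) < f i ((1 - θ) • p + θ • w) :=
    (hlim _ hzs).eventually (lt_mem_nhds hpb)
  have hnear : ∀ᶠ y in 𝓝 y₀, dist y y₀ < θ * r / 2 := ball_mem_nhds y₀ (by positivity)
  filter_upwards [hfD.prod_inl _, hf.prod_inl _, hM.prod_inl _, hzs_lim.prod_inl _,
    hnear.prod_inr _] with ⟨i, y⟩ hfDi hfi hMi hzi hy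
  by_cases hy_top : f i y = ⊤
  · simp [hy_top]
  have hyD : y ∈ D := hfDi y (lt_top_iff_ne_top.2 hy_top)
  have hpy : dist p y < θ * r := (dist_triangle_right _ _ y₀).trans_lt (by linarith)
  exact hfi.coe_le_of_dist_lt hMi (subset_affineSpan ℝ D hpD)
    (subset_affineSpan ℝ D (intrinsicInterior_subset hw)) (subset_affineSpan ℝ D hyD) hθ0
    hθ1.le hpy hzi (by linarith)

theorem eventually_lt_iInf_add [FiniteDimensional ℝ E] (hDc : Convex ℝ D)
    (hfD : ∀ᶠ i in l, ∀ x, f i x < ⊤ → x ∈ D) (hf : ∀ᶠ i in l, ERealConvex (f i))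
    (hgD : ∀ x ∈ D, g x < ⊤) (hg : LowerSemicontinuous g)
    (hlim : ∀ x ∈ D, Tendsto (f · x) l (𝓝 (g x))) {a q : E → ℝ}
    (ha : ∀ᶠ i in l, ∀ y, (a y : EReal) ≤ f i y) (hq : Continuous q)
    (hcoer : Tendsto (fun y => a y + q y) (cocompact E) atTop) {t : EReal}
    (ht : t < ⨅ y, g y + q y) : ∀ᶠ i in l, t < ⨅ y, f i y + q y := by
  obtain ⟨s, hts, hs⟩ := EReal.exists_between_coe_real ht
  obtain ⟨K, hK, hKs⟩ := mem_cocompact.1 (hcoer.eventually_ge_atTop s)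
  have hlocal : ∀ y₀ ∈ K, ∀ᶠ z in l ×ˢ 𝓝 y₀, (s : EReal) ≤ f z.1 z.2 + q z.2 := by
    intro y₀ _
    have h₀ : ((s - q y₀ : ℝ) : EReal) < g y₀ := by
      rw [EReal.coe_sub]
      exact (EReal.sub_lt_iff (.inl (EReal.coe_ne_bot _)) (.inl (EReal.coe_ne_top _))).2
        (hs.trans_le (iInf_le _ y₀))
    obtain ⟨c, hsc, hc⟩ := EReal.exists_between_coe_real h₀
    have hsc' : s - q y₀ < c := EReal.coe_lt_coe_iff.1 hsc
    have hq' : ∀ᶠ y in 𝓝 y₀, s - c < q y :=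
      hq.continuousAt.eventually (lt_mem_nhds (by linarith))
    filter_upwards [eventually_prod_nhds_coe_le hDc hfD hf hgD hg hlim hc, hq'.prod_inr l]
      with z hz hqz
    calc (s : EReal) ≤ ((c + q z.2 : ℝ) : EReal) := EReal.coe_le_coe_iff.2 (by linarith)
      _ ≤ f z.1 z.2 + q z.2 := by rw [EReal.coe_add]; exact add_le_add_left hz _
  have hK' : ∀ᶠ i in l, ∀ y ∈ K, (s : EReal) ≤ f i y + q y :=
    have : ∀ᶠ z in l ×ˢ 𝓝ˢ K, (s : EReal) ≤ f z.1 z.2 + q z.2 :=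
      hK.mem_prod_nhdsSet_of_forall hlocal
    this.curry.mono fun _ h => h.self_of_nhdsSet
  filter_upwards [hK', ha] with i hiK hia
  refine hts.trans_le (le_iInf fun y => ?_)
  by_cases hy : y ∈ K
  · exact hiK y hy
  · calc (s : EReal) ≤ ((a y + q y : ℝ) : EReal) := EReal.coe_le_coe_iff.2 (hKs hy)
      _ ≤ f i y + q y := by rw [EReal.coe_add]; exact add_le_add_left (hia y) _

end Family

theorem tendsto_inner_add_sq_norm_div_cocompact {F : Type*} [NormedAddCommGroup F]
    [InnerProductSpace ℝ F] [ProperSpace F] (v x : F) (c : ℝ) {α : ℝ} (hα : 0 < α) :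
    Tendsto (fun y => ⟪v, y⟫ + c + ‖y - x‖ ^ 2 / (2 * α)) (cocompact F) atTop := by
  have hquad : Tendsto (fun r => ⟪v, x⟫ + c + r * (r / (2 * α) - ‖v‖)) atTop atTop :=
    tendsto_atTop_add_const_left _ _ (tendsto_id.atTop_mul_atTop₀
      (tendsto_atTop_add_const_right _ _ (tendsto_id.atTop_div_const (by positivity))))
  refine tendsto_atTop_mono (fun y => ?_) (hquad.comp (tendsto_dist_right_cocompact_atTop x))
  have hvy : ⟪v, x⟫ - ‖v‖ * ‖y - x‖ ≤ ⟪v, y⟫ := by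
    have := neg_le_of_abs_le (abs_real_inner_le_norm v (y - x))
    rw [inner_sub_right] at this
    linarith
  simp only [Function.comp, dist_eq_norm]
  have : ‖y - x‖ * (‖y - x‖ / (2 * α) - ‖v‖) = ‖y - x‖ ^ 2 / (2 * α) - ‖v‖ * ‖y - x‖ := by ring
  linarith

theorem moreau_env_converges_general {m : ℕ}
    (φ : EuclideanSpace ℝ (Fin m) → EReal)
    (φs : ℝ → EuclideanSpace ℝ (Fin m) → EReal)
    (D : Set (EuclideanSpace ℝ (Fin m)))
    (hD : D = {x | φ x < ⊤})
    (hDeps : ∀ ε ∈ Set.Ioo (0 : ℝ) 1, {x | φs ε x < ⊤} = D)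
    (hconv : ∀ (x y : EuclideanSpace ℝ (Fin m)) (a b : ℝ), 0 ≤ a → 0 ≤ b → a + b = 1 →
      φ (a • x + b • y) ≤ (a : EReal) * φ x + (b : EReal) * φ y)
    (hconv' : ∀ ε ∈ Set.Ioo (0 : ℝ) 1,
      ∀ (x y : EuclideanSpace ℝ (Fin m)) (a b : ℝ), 0 ≤ a → 0 ≤ b → a + b = 1 →
        φs ε (a • x + b • y) ≤ (a : EReal) * φs ε x + (b : EReal) * φs ε y)
    (hlsc : LowerSemicontinuous φ)
    -- uniform affine lower bound (so all the infima are finite and values are never `⊥`)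
    (hlow : ∃ (v : EuclideanSpace ℝ (Fin m)) (c : ℝ),
      (∀ x, ((⟪v, x⟫ + c : ℝ) : EReal) ≤ φ x) ∧
      ∀ ε ∈ Set.Ioo (0 : ℝ) 1, ∀ x, ((⟪v, x⟫ + c : ℝ) : EReal) ≤ φs ε x)
    -- pointwise convergence on the common domain
    (hpt : ∀ x ∈ D, Filter.Tendsto (fun ε => φs ε x) (nhdsWithin 0 (Set.Ioi 0)) (nhds (φ x))) :
    ∀ α > (0 : ℝ), ∀ x, Filter.Tendsto (fun ε => moreauEnv (φs ε) α x)
      (nhdsWithin 0 (Set.Ioi 0)) (nhds (moreauEnv φ α x)) := by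
  intro α hα x
  obtain ⟨v, c, -, hφsv⟩ := hlow
  have hIoo : ∀ᶠ ε in 𝓝[>] (0 : ℝ), ε ∈ Ioo 0 1 := Ioo_mem_nhdsGT one_pos
  subst hD
  refine tendsto_order.2 ⟨fun t ht => ?_, fun t ht => ?_⟩
  · exact eventually_lt_iInf_add (ERealConvex.convex_lt_top hconv)
      (hIoo.mono fun ε hε y hy => hDeps ε hε ▸ hy) (hIoo.mono hconv') (fun _ hy => hy) hlsc hpt
      (a := fun y => ⟪v, y⟫ + c) (hIoo.mono hφsv) (by fun_prop)
      (tendsto_inner_add_sq_norm_div_cocompact v x c hα) ht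
  · exact eventually_iInf_add_lt hpt _ ht

/-- If proper convex lsc functions `φ_ε` (with common domain `D`) converge pointwise on `D`
to `φ` as `ε ↓ 0`, then their Moreau envelopes converge pointwise:
`φ_ε^α(x) → φ^α(x)` for every `α > 0` and every `x`. -/
theorem moreau_env_converges {m : ℕ}
    (φ : EuclideanSpace ℝ (Fin m) → EReal)
    (φs : ℝ → EuclideanSpace ℝ (Fin m) → EReal)
    (D : Set (EuclideanSpace ℝ (Fin m)))
    (hD : D = {x | φ x < ⊤}) (hDne : D.Nonempty)
    (hDeps : ∀ ε ∈ Set.Ioo (0 : ℝ) 1, {x | φs ε x < ⊤} = D)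
    (hconv : ∀ (x y : EuclideanSpace ℝ (Fin m)) (a b : ℝ), 0 ≤ a → 0 ≤ b → a + b = 1 →
      φ (a • x + b • y) ≤ (a : EReal) * φ x + (b : EReal) * φ y)
    (hconv' : ∀ ε ∈ Set.Ioo (0 : ℝ) 1,
      ∀ (x y : EuclideanSpace ℝ (Fin m)) (a b : ℝ), 0 ≤ a → 0 ≤ b → a + b = 1 →
        φs ε (a • x + b • y) ≤ (a : EReal) * φs ε x + (b : EReal) * φs ε y)
    (hlsc : LowerSemicontinuous φ)
    (hlsc' : ∀ ε ∈ Set.Ioo (0 : ℝ) 1, LowerSemicontinuous (φs ε))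
    -- uniform affine lower bound (so all the infima are finite and values are never `⊥`)
    (hlow : ∃ (v : EuclideanSpace ℝ (Fin m)) (c : ℝ),
      (∀ x, ((⟪v, x⟫ + c : ℝ) : EReal) ≤ φ x) ∧
      ∀ ε ∈ Set.Ioo (0 : ℝ) 1, ∀ x, ((⟪v, x⟫ + c : ℝ) : EReal) ≤ φs ε x)
    -- pointwise convergence on the common domain
    (hpt : ∀ x ∈ D, Filter.Tendsto (fun ε => φs ε x) (nhdsWithin 0 (Set.Ioi 0)) (nhds (φ x))) :
    ∀ α > (0 : ℝ), ∀ x, Filter.Tendsto (fun ε => moreauEnv (φs ε) α x)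
      (nhdsWithin 0 (Set.Ioi 0)) (nhds (moreauEnv φ α x)) :=
  moreau_env_converges_general φ φs D hD hDeps hconv hconv' hlsc hlow hpt
end

section
/- Let u ∈ H := {u ∈ C([0,1];ℝᵐ) : u(0) = 0, u absolutely continuous with ∫₀¹|u̇|² ds < ∞} with ‖u‖²_H = ∫₀¹|u̇(s)|²ds ≤ 4R, and let σ : [0,1] → ℝ^{m×k} be measurable with ∫₀¹‖σ(t)‖²dt < ∞. For h, h₀ ∈ H with ‖h‖²_H, ‖h₀‖²_H ≤ 4R, if sup_{t∈[0,1]}|h(t) - h₀(t)| → 0 (along a sequence with the uniform H-norm bound), then sup_{t∈[0,1]} |∫₀ᵗ σ(s)(ḣ(s) - ḣ₀(s)) ds| → 0. -/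
/-!
Write `g = ḣ - ḣ₀`, so that `∫₀ᵗ g = h(t) - h₀(t)` tends to `0` uniformly in `t` while `g` stays
bounded in `L²`. For continuous `σ` this is a Riemann–Stieltjes estimate: cut `[0, t]` into `N`
pieces of mesh below the modulus of uniform continuity of `σ`; freezing `σ` at the left end point
of each piece costs `ε ∫ |g|`, and the frozen sum is at most `2 N sup |σ| sup |h - h₀|`.
A general `σ ∈ L²` is approximated in `L²` by a bounded continuous `φ`, and by Cauchy–Schwarz the
error `∫₀ᵗ (σ - φ) g` is at most `‖σ - φ‖₂ ‖g‖₂`, uniformly small since `g` is bounded in `L²`.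
-/

open MeasureTheory Set Filter Topology
open scoped ENNReal

section SSup

variable {ι α E : Type*} [SeminormedAddCommGroup E] {l : Filter ι} {F : ι → α → E} {s : Set α}

/-- `hbdd` cannot be dropped: the `sSup` of an unbounded set of reals is `0`. -/
theorem tendstoUniformlyOn_zero_of_tendsto_sSup_norm
    (hbdd : ∀ i, BddAbove ((fun x => ‖F i x‖) '' s))
    (h : Tendsto (fun i => sSup ((fun x => ‖F i x‖) '' s)) l (𝓝 0)) :
    TendstoUniformlyOn F 0 l s := by
  rw [Metric.tendstoUniformlyOn_iff]
  intro ε hε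
  filter_upwards [h.eventually (gt_mem_nhds hε)] with i hi x hx
  rw [Pi.zero_apply, dist_zero_left]
  exact (le_csSup (hbdd i) (mem_image_of_mem _ hx)).trans_lt hi

theorem tendsto_sSup_norm_of_tendstoUniformlyOn (h : TendstoUniformlyOn F 0 l s) :
    Tendsto (fun i => sSup ((fun x => ‖F i x‖) '' s)) l (𝓝 0) := by
  rw [Metric.tendsto_nhds]
  intro ε hε
  filter_upwards [Metric.tendstoUniformlyOn_iff.1 h (ε / 2) (half_pos hε)] with i hi
  have hle : sSup ((fun x => ‖F i x‖) '' s) ≤ ε / 2 := by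
    refine Real.sSup_le ?_ (half_pos hε).le
    rintro _ ⟨x, hx, rfl⟩
    simpa using (hi x hx).le
  have hnonneg : 0 ≤ sSup ((fun x => ‖F i x‖) '' s) :=
    Real.sSup_nonneg (by rintro _ ⟨x, -, rfl⟩; exact norm_nonneg _)
  rw [Real.dist_eq, sub_zero, abs_of_nonneg hnonneg]
  linarith

end SSup

theorem MeasureTheory.MemLp.eLpNorm_two_le_ofReal_sqrt {α E : Type*} [MeasurableSpace α]
    {μ : Measure α} [NormedAddCommGroup E] {f : α → E} (hf : MemLp f 2 μ) {C : ℝ}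
    (hC : ∫ x, ‖f x‖ ^ 2 ∂μ ≤ C) : eLpNorm f 2 μ ≤ ENNReal.ofReal √C := by
  rw [hf.eLpNorm_eq_integral_rpow_norm two_ne_zero ENNReal.ofNat_ne_top, ENNReal.toReal_ofNat,
    Real.sqrt_eq_rpow, one_div]
  refine ENNReal.ofReal_le_ofReal (Real.rpow_le_rpow (integral_nonneg fun x => ?_) ?_ (by norm_num))
  · positivity
  · simpa using hC

theorem MeasureTheory.IntegrableOn.intervalIntegrable_of_mem_Icc {E : Type*} [NormedAddCommGroup E]
    {μ : Measure ℝ} {f : ℝ → E} {a b u v : ℝ} (hf : IntegrableOn f (Icc a b) μ) (hu : u ∈ Icc a b)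
    (hv : v ∈ Icc a b) : IntervalIntegrable f μ u v :=
  (hf.mono_set (uIcc_subset_Icc hu hv)).intervalIntegrable

theorem MeasureTheory.IntegrableOn.bddAbove_image_norm_intervalIntegral {E : Type*}
    [NormedAddCommGroup E] [NormedSpace ℝ E] {f : ℝ → E} {a b : ℝ} (hf : IntegrableOn f (Icc a b))
    (hab : a ≤ b) : BddAbove ((fun t => ‖∫ s in a..t, f s‖) '' Icc a b) := by
  rw [← uIcc_of_le hab] at hf ⊢
  exact isCompact_uIcc.bddAbove_image (intervalIntegral.continuousOn_primitive_interval hf).norm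

theorem exists_uniform_partition {a t : ℝ} (hat : a ≤ t) {N : ℕ} (hN : N ≠ 0) :
    ∃ p : ℕ → ℝ, Monotone p ∧ p 0 = a ∧ p N = t ∧ ∀ j, p (j + 1) - p j = (t - a) / N := by
  have hstep : 0 ≤ (t - a) / N := div_nonneg (sub_nonneg.2 hat) N.cast_nonneg
  refine ⟨fun j => a + j * ((t - a) / N), fun i j hij => ?_, by simp, ?_, fun j => ?_⟩
  · dsimp only
    gcongr
  · dsimp only
    field_simp
    ring
  · push_cast
    ring

theorem norm_intervalIntegral_le_of_norm_primitive_le {E : Type*} [NormedAddCommGroup E]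
    [NormedSpace ℝ E] {g : ℝ → E} {a b u v θ : ℝ} (hg : IntegrableOn g (Icc a b))
    (hG : ∀ t ∈ Icc a b, ‖∫ s in a..t, g s‖ ≤ θ) (hu : u ∈ Icc a b) (hv : v ∈ Icc a b) :
    ‖∫ s in u..v, g s‖ ≤ 2 * θ := by
  have ha : a ∈ Icc a b := ⟨le_rfl, hu.1.trans hu.2⟩
  rw [← intervalIntegral.integral_interval_sub_left (hg.intervalIntegrable_of_mem_Icc ha hv)
    (hg.intervalIntegrable_of_mem_Icc ha hu)]
  linarith [norm_sub_le (∫ s in a..v, g s) (∫ s in a..u, g s), hG v hv, hG u hu]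

section ClmApply

variable {E F : Type*} [NormedAddCommGroup E] [NormedSpace ℝ E] [NormedAddCommGroup F]
  [NormedSpace ℝ F]

theorem enorm_intervalIntegral_clm_apply_le {A : ℝ → E →L[ℝ] F} {g : ℝ → E} {a b t : ℝ}
    {p q : ℝ≥0∞} [p.HolderConjugate q] (ht : t ∈ Icc a b)
    (hA : AEStronglyMeasurable A (volume.restrict (Icc a b)))
    (hg : AEStronglyMeasurable g (volume.restrict (Icc a b))) :
    ‖∫ s in a..t, A s (g s)‖ₑ ≤
      eLpNorm A p (volume.restrict (Icc a b)) * eLpNorm g q (volume.restrict (Icc a b)) :=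
  calc ‖∫ s in a..t, A s (g s)‖ₑ
      = ‖∫ s in Ioc a t, A s (g s)‖ₑ := by rw [intervalIntegral.integral_of_le ht.1]
    _ ≤ ∫⁻ s in Ioc a t, ‖A s (g s)‖ₑ := enorm_integral_le_lintegral_enorm _
    _ ≤ ∫⁻ s in Icc a b, ‖A s (g s)‖ₑ :=
      lintegral_mono_set (Ioc_subset_Icc_self.trans (Icc_subset_Icc_right ht.2))
    _ = eLpNorm (fun s => A s (g s)) 1 (volume.restrict (Icc a b)) :=
      eLpNorm_one_eq_lintegral_enorm.symm
    _ ≤ _ := by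
      simpa using eLpNorm_le_eLpNorm_mul_eLpNorm'_of_norm hA hg (fun A v => A v) 1
        (ae_of_all _ fun s => by simpa using (A s).le_opNorm (g s))

variable [CompleteSpace E] [CompleteSpace F]

theorem norm_intervalIntegral_clm_apply_le_of_norm_sub_le {φ : ℝ → E →L[ℝ] F} {g : ℝ → E}
    {u v ε : ℝ} (huv : u ≤ v) (hφ : AEStronglyMeasurable φ (volume.restrict (Ioc u v)))
    (hg : IntervalIntegrable g volume u v) (hosc : ∀ s ∈ Icc u v, ‖φ s - φ u‖ ≤ ε) :
    ‖∫ s in u..v, φ s (g s)‖ ≤ ε * (∫ s in u..v, ‖g s‖) + ‖φ u‖ * ‖∫ s in u..v, g s‖ := by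
  have hosc' : ∀ s ∈ Ioc u v, ‖(φ s - φ u) (g s)‖ ≤ ε * ‖g s‖ := fun s hs =>
    ((φ s - φ u).le_opNorm _).trans
      (mul_le_mul_of_nonneg_right (hosc s (Ioc_subset_Icc_self hs)) (norm_nonneg _))
  have hdev : IntervalIntegrable (fun s => (φ s - φ u) (g s)) volume u v := by
    rw [intervalIntegrable_iff_integrableOn_Ioc_of_le huv] at hg ⊢
    exact (ContinuousLinearMap.id ℝ (E →L[ℝ] F)).integrable_of_bilin_of_bdd_left ε
      (hφ.sub aestronglyMeasurable_const)
      ((ae_restrict_iff' measurableSet_Ioc).2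
        (ae_of_all _ fun s hs => hosc s (Ioc_subset_Icc_self hs)))
      hg
  have hsplit : ∫ s in u..v, φ s (g s) =
      (∫ s in u..v, (φ s - φ u) (g s)) + φ u (∫ s in u..v, g s) := by
    rw [← (φ u).intervalIntegral_comp_comm hg, ← intervalIntegral.integral_add hdev
      ⟨(φ u).integrable_comp hg.1, (φ u).integrable_comp hg.2⟩]
    simp
  have hdev_le : ‖∫ s in u..v, (φ s - φ u) (g s)‖ ≤ ε * ∫ s in u..v, ‖g s‖ := by
    rw [← intervalIntegral.integral_const_mul]
    exact intervalIntegral.norm_integral_le_of_norm_le huv (ae_of_all _ hosc')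
      (hg.norm.const_mul ε)
  rw [hsplit]
  exact (norm_add_le _ _).trans (add_le_add hdev_le ((φ u).le_opNorm _))

theorem norm_intervalIntegral_clm_apply_le_of_norm_primitive_le {φ : ℝ → E →L[ℝ] F}
    (hφ : Continuous φ) {g : ℝ → E} {a b : ℝ} (hg : IntegrableOn g (Icc a b)) {N : ℕ} (hN : 0 < N)
    {ε C θ : ℝ} (hC : ∀ s ∈ Icc a b, ‖φ s‖ ≤ C)
    (hosc : ∀ s ∈ Icc a b, ∀ s' ∈ Icc a b, |s - s'| ≤ (b - a) / N → ‖φ s - φ s'‖ ≤ ε)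
    (hG : ∀ t ∈ Icc a b, ‖∫ s in a..t, g s‖ ≤ θ) {t : ℝ} (ht : t ∈ Icc a b) :
    ‖∫ s in a..t, φ s (g s)‖ ≤ ε * (∫ s in Icc a b, ‖g s‖) + 2 * N * C * θ := by
  obtain ⟨hat, htb⟩ := ht
  have ha : a ∈ Icc a b := ⟨le_rfl, hat.trans htb⟩
  have hε : 0 ≤ ε := by
    simpa using hosc a ha a ha (by simpa using div_nonneg (sub_nonneg.2 ha.2) N.cast_nonneg)
  have hC0 : 0 ≤ C := (norm_nonneg _).trans (hC a ha)
  have hφg : IntegrableOn (fun s => φ s (g s)) (Icc a b) :=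
    (ContinuousLinearMap.id ℝ (E →L[ℝ] F)).integrable_of_bilin_of_bdd_left C
      hφ.aestronglyMeasurable ((ae_restrict_iff' measurableSet_Icc).2 (ae_of_all _ hC)) hg
  obtain ⟨p, hp_mono, hp0, hpN, hp_step⟩ := exists_uniform_partition hat hN.ne'
  have hp_mem : ∀ j ≤ N, p j ∈ Icc a b := fun j hj =>
    ⟨hp0 ▸ hp_mono j.zero_le, (hpN ▸ hp_mono hj).trans htb⟩
  have hpiece : ∀ j < N, ‖∫ s in p j..p (j + 1), φ s (g s)‖ ≤
      ε * (∫ s in p j..p (j + 1), ‖g s‖) + C * (2 * θ) := by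
    intro j hj
    have hj0 := hp_mem j hj.le
    have hj1 := hp_mem (j + 1) hj
    have hosc_j : ∀ s ∈ Icc (p j) (p (j + 1)), ‖φ s - φ (p j)‖ ≤ ε := by
      intro s hs
      refine hosc s ⟨hj0.1.trans hs.1, hs.2.trans hj1.2⟩ (p j) hj0 ?_
      rw [abs_of_nonneg (sub_nonneg.2 hs.1)]
      calc s - p j ≤ p (j + 1) - p j := by linarith [hs.2]
        _ = (t - a) / N := hp_step j
        _ ≤ (b - a) / N := by gcongr
    refine (norm_intervalIntegral_clm_apply_le_of_norm_sub_le (hp_mono j.le_succ)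
      hφ.aestronglyMeasurable (hg.intervalIntegrable_of_mem_Icc hj0 hj1) hosc_j).trans ?_
    gcongr
    · exact hC _ hj0
    · exact norm_intervalIntegral_le_of_norm_primitive_le hg hG hj0 hj1
  have hnorm_g : ∫ s in a..t, ‖g s‖ ≤ ∫ s in Icc a b, ‖g s‖ := by
    rw [intervalIntegral.integral_of_le hat]
    exact setIntegral_mono_set hg.norm (ae_of_all _ fun s => norm_nonneg _)
      (Ioc_subset_Icc_self.trans (Icc_subset_Icc_right htb)).eventuallyLE
  calc ‖∫ s in a..t, φ s (g s)‖
      = ‖∑ j ∈ Finset.range N, ∫ s in p j..p (j + 1), φ s (g s)‖ := by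
        rw [intervalIntegral.sum_integral_adjacent_intervals
          fun j hj => hφg.intervalIntegrable_of_mem_Icc (hp_mem j hj.le) (hp_mem (j + 1) hj),
          hp0, hpN]
    _ ≤ ∑ j ∈ Finset.range N, (ε * (∫ s in p j..p (j + 1), ‖g s‖) + C * (2 * θ)) :=
        (norm_sum_le _ _).trans (Finset.sum_le_sum fun j hj => hpiece j (Finset.mem_range.1 hj))
    _ = ε * (∫ s in a..t, ‖g s‖) + 2 * N * C * θ := by
        rw [Finset.sum_add_distrib, ← Finset.mul_sum,
          intervalIntegral.sum_integral_adjacent_intervals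
          fun j hj => (hg.intervalIntegrable_of_mem_Icc (hp_mem j hj.le) (hp_mem (j + 1) hj)).norm,
          hp0, hpN]
        simp only [Finset.sum_const, Finset.card_range, nsmul_eq_mul]
        ring
    _ ≤ ε * (∫ s in Icc a b, ‖g s‖) + 2 * N * C * θ := by gcongr

theorem tendstoUniformlyOn_intervalIntegral_clm_apply_of_continuous {ι : Type*} {l : Filter ι}
    {φ : ℝ → E →L[ℝ] F} (hφ : Continuous φ) {a b : ℝ} {g : ι → ℝ → E} {M : ℝ≥0∞} (hM : M ≠ ∞)
    (hg : ∀ i, IntegrableOn (g i) (Icc a b))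
    (hgM : ∀ i, eLpNorm (g i) 1 (volume.restrict (Icc a b)) ≤ M)
    (hG : TendstoUniformlyOn (fun i t => ∫ s in a..t, g i s) 0 l (Icc a b)) :
    TendstoUniformlyOn (fun i t => ∫ s in a..t, φ s (g i s)) 0 l (Icc a b) := by
  have hgM' : ∀ i, ∫ s in Icc a b, ‖g i s‖ ≤ M.toReal := fun i => by
    rw [integral_norm_eq_lintegral_enorm (hg i).1, ← eLpNorm_one_eq_lintegral_enorm]
    exact ENNReal.toReal_mono hM (hgM i)
  rw [Metric.tendstoUniformlyOn_iff] at hG ⊢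
  intro ε hε
  obtain ⟨C, hC⟩ := (isCompact_Icc (a := a) (b := b)).exists_bound_of_continuousOn hφ.continuousOn
  obtain ⟨ε', hε', hε'M⟩ := exists_pos_mul_lt (half_pos hε) M.toReal
  obtain ⟨δ, hδ, hosc⟩ := Metric.uniformContinuousOn_iff_le.1
    ((isCompact_Icc (a := a) (b := b)).uniformContinuousOn_of_continuous hφ.continuousOn) ε' hε'
  obtain ⟨N, hN⟩ := exists_nat_gt (max ((b - a) / δ) 0)
  have hN0 : (0 : ℝ) < N := (le_max_right _ _).trans_lt hN
  have hmesh : (b - a) / N ≤ δ := by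
    rw [div_le_iff₀ hN0]
    have := (le_max_left _ _).trans_lt hN
    rw [div_lt_iff₀ hδ] at this
    linarith
  obtain ⟨θ, hθ, hθC⟩ := exists_pos_mul_lt (half_pos hε) (2 * N * C)
  filter_upwards [hG θ hθ] with i hi t ht
  simp only [Pi.zero_apply, dist_zero_left] at hi ⊢
  have key := norm_intervalIntegral_clm_apply_le_of_norm_primitive_le hφ (hg i)
    (Nat.cast_pos.1 hN0) hC (fun s hs s' hs' hss' => by
      simpa [dist_eq_norm, Real.dist_eq] using hosc s hs s' hs' (by rw [Real.dist_eq]; linarith))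
    (fun t ht => (hi t ht).le) ht
  nlinarith [mul_le_mul_of_nonneg_left (hgM' i) hε'.le]

theorem tendstoUniformlyOn_intervalIntegral_clm_apply {ι : Type*} {l : Filter ι}
    {σ : ℝ → E →L[ℝ] F} {a b : ℝ} (hσ : MemLp σ 2 (volume.restrict (Icc a b)))
    {g : ι → ℝ → E} {M : ℝ≥0∞} (hM : M ≠ ∞) (hg : ∀ i, MemLp (g i) 2 (volume.restrict (Icc a b)))
    (hgM : ∀ i, eLpNorm (g i) 2 (volume.restrict (Icc a b)) ≤ M)
    (hG : TendstoUniformlyOn (fun i t => ∫ s in a..t, g i s) 0 l (Icc a b)) :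
    TendstoUniformlyOn (fun i t => ∫ s in a..t, σ s (g i s)) 0 l (Icc a b) := by
  set μ := volume.restrict (Icc a b)
  obtain ⟨M₁, hM₁, hgM₁⟩ : ∃ M₁ ≠ ∞, ∀ i, eLpNorm (g i) 1 μ ≤ M₁ := by
    refine ⟨M * μ univ ^ (1 / 2 : ℝ), by finiteness, fun i => ?_⟩
    refine (eLpNorm_le_eLpNorm_mul_rpow_measure_univ one_le_two (hg i).1).trans ?_
    rw [show 1 / (1 : ℝ≥0∞).toReal - 1 / (2 : ℝ≥0∞).toReal = 1 / 2 by norm_num]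
    gcongr
    exact hgM i
  rw [EMetric.tendstoUniformlyOn_iff]
  intro ε hε
  obtain ⟨η, hη, hηM⟩ := ENNReal.exists_pos_mul_lt hM (ENNReal.half_pos hε.ne').ne'
  obtain ⟨φ, hσφ, hφ2⟩ := hσ.exists_boundedContinuous_eLpNorm_sub_le ENNReal.ofNat_ne_top hη.ne'
  have hφ := tendstoUniformlyOn_intervalIntegral_clm_apply_of_continuous φ.continuous hM₁
    (fun i => (hg i).integrable one_le_two) hgM₁ hG
  filter_upwards [EMetric.tendstoUniformlyOn_iff.1 hφ (ε / 2) (ENNReal.half_pos hε.ne')]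
    with i hi t ht
  specialize hi t ht
  simp only [Pi.zero_apply, edist_zero_left, ← enorm_eq_nnnorm] at hi ⊢
  have hint : ∀ A : ℝ → E →L[ℝ] F, MemLp A 2 μ →
      IntervalIntegrable (fun s => A s (g i s)) volume a t := by
    intro A hA
    have hAg : IntegrableOn (fun s => A s (g i s)) (Icc a b) := memLp_one_iff_integrable.1
      ((ContinuousLinearMap.id ℝ (E →L[ℝ] F)).memLp_of_bilin 1 hA (hg i))
    exact hAg.intervalIntegrable_of_mem_Icc ⟨le_rfl, ht.1.trans ht.2⟩ ht
  have hsplit : ∫ s in a..t, σ s (g i s) =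
      (∫ s in a..t, (σ - ⇑φ) s (g i s)) + ∫ s in a..t, φ s (g i s) := by
    rw [← intervalIntegral.integral_add (hint _ (hσ.sub hφ2)) (hint _ hφ2)]
    simp
  calc ‖∫ s in a..t, σ s (g i s)‖ₑ
      ≤ ‖∫ s in a..t, (σ - ⇑φ) s (g i s)‖ₑ + ‖∫ s in a..t, φ s (g i s)‖ₑ := by
        rw [hsplit]; exact enorm_add_le _ _
    _ < ε / 2 + ε / 2 := by
        refine ENNReal.add_lt_add (lt_of_le_of_lt ?_ hηM) hi
        calc ‖∫ s in a..t, (σ - ⇑φ) s (g i s)‖ₑ ≤ eLpNorm (σ - ⇑φ) 2 μ * eLpNorm (g i) 2 μ :=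
              enorm_intervalIntegral_clm_apply_le ht (hσ.sub hφ2).1 (hg i).1
          _ ≤ η * M := by gcongr; exact hgM i
    _ = ε := ENNReal.add_halves ε

end ClmApply

theorem control_integral_convergence_general {m k : ℕ}
    (σ : ℝ → (EuclideanSpace ℝ (Fin k) →L[ℝ] EuclideanSpace ℝ (Fin m)))
    (hσmeas : AEStronglyMeasurable σ (volume.restrict (Set.Icc 0 1)))
    (hσL2 : IntegrableOn (fun t => ‖σ t‖ ^ 2) (Set.Icc 0 1) volume)
    (R : ℝ)
    (dh : ℕ → ℝ → EuclideanSpace ℝ (Fin k))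
    (dh₀ : ℝ → EuclideanSpace ℝ (Fin k))
    (h : ℕ → ℝ → EuclideanSpace ℝ (Fin k))
    (h₀ : ℝ → EuclideanSpace ℝ (Fin k))
    (hdhmeas : ∀ n, AEStronglyMeasurable (dh n) (volume.restrict (Set.Icc 0 1)))
    (hdh₀meas : AEStronglyMeasurable dh₀ (volume.restrict (Set.Icc 0 1)))
    (hdhL2 : ∀ n, IntegrableOn (fun t => ‖dh n t‖ ^ 2) (Set.Icc 0 1) volume)
    (hdh₀L2 : IntegrableOn (fun t => ‖dh₀ t‖ ^ 2) (Set.Icc 0 1) volume)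
    (hh : ∀ n, ∀ t ∈ Set.Icc (0 : ℝ) 1, h n t = ∫ s in (0 : ℝ)..t, dh n s)
    (hh₀ : ∀ t ∈ Set.Icc (0 : ℝ) 1, h₀ t = ∫ s in (0 : ℝ)..t, dh₀ s)
    (henergy : ∀ n, (∫ t in (0 : ℝ)..1, ‖dh n t‖ ^ 2) ≤ 4 * R)
    (henergy₀ : (∫ t in (0 : ℝ)..1, ‖dh₀ t‖ ^ 2) ≤ 4 * R)
    (hconv : Filter.Tendsto (fun n => sSup ((fun t => ‖h n t - h₀ t‖) '' Set.Icc 0 1))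
      Filter.atTop (nhds 0)) :
    Filter.Tendsto
      (fun n => sSup ((fun t => ‖∫ s in (0 : ℝ)..t, σ s (dh n s - dh₀ s)‖) '' Set.Icc 0 1))
      Filter.atTop (nhds 0) := by
  set I := Set.Icc (0 : ℝ) 1
  have hdh n := (memLp_two_iff_integrable_sq_norm (hdhmeas n)).2 (hdhL2 n)
  have hdh₀ := (memLp_two_iff_integrable_sq_norm hdh₀meas).2 hdh₀L2
  have henergy_le {f : ℝ → EuclideanSpace ℝ (Fin k)} (hf : MemLp f 2 (volume.restrict I))
      (hE : ∫ t in (0 : ℝ)..1, ‖f t‖ ^ 2 ≤ 4 * R) :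
      eLpNorm f 2 (volume.restrict I) ≤ .ofReal √(4 * R) :=
    hf.eLpNorm_two_le_ofReal_sqrt <| by
      rwa [integral_Icc_eq_integral_Ioc, ← intervalIntegral.integral_of_le zero_le_one]
  set g := fun n s => dh n s - dh₀ s
  have hg n : MemLp (g n) 2 (volume.restrict I) := (hdh n).sub hdh₀
  have hgM n : eLpNorm (g n) 2 (volume.restrict I) ≤ 2 * .ofReal √(4 * R) := by
    rw [two_mul]
    exact (eLpNorm_sub_le (hdh n).1 hdh₀.1 one_le_two).trans
      (add_le_add (henergy_le (hdh n) (henergy n)) (henergy_le hdh₀ henergy₀))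
  have hprim n : ∀ t ∈ I, ‖h n t - h₀ t‖ = ‖∫ s in (0 : ℝ)..t, g n s‖ := by
    intro t ht
    have h0 : (0 : ℝ) ∈ I := ⟨le_rfl, zero_le_one⟩
    rw [hh n t ht, hh₀ t ht, intervalIntegral.integral_sub
      (IntegrableOn.intervalIntegrable_of_mem_Icc ((hdh n).integrable one_le_two) h0 ht)
      (IntegrableOn.intervalIntegrable_of_mem_Icc (hdh₀.integrable one_le_two) h0 ht)]
  have hG : TendstoUniformlyOn (fun n t => ∫ s in (0 : ℝ)..t, g n s) 0 atTop I :=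
    tendstoUniformlyOn_zero_of_tendsto_sSup_norm
      (fun n => IntegrableOn.bddAbove_image_norm_intervalIntegral
        ((hg n).integrable one_le_two) zero_le_one)
      (hconv.congr fun n => congrArg sSup (image_congr (hprim n)))
  exact tendsto_sSup_norm_of_tendstoUniformlyOn <| tendstoUniformlyOn_intervalIntegral_clm_apply
    ((memLp_two_iff_integrable_sq_norm hσmeas).2 hσL2) (by finiteness) hg hgM hG

/-- If controls `hₙ` with uniformly bounded Cameron–Martin energy (`∫₀¹|ḣₙ|² ≤ 4R`)
converge uniformly to `h₀`, then the integrals `∫₀ᵗ σ(s)(ḣₙ(s) - ḣ₀(s)) ds` converge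
to `0` uniformly in `t ∈ [0,1]`, for any `σ ∈ L²([0,1])`. -/
theorem control_integral_convergence {m k : ℕ}
    (σ : ℝ → (EuclideanSpace ℝ (Fin k) →L[ℝ] EuclideanSpace ℝ (Fin m)))
    (hσmeas : AEStronglyMeasurable σ (volume.restrict (Set.Icc 0 1)))
    (hσL2 : IntegrableOn (fun t => ‖σ t‖ ^ 2) (Set.Icc 0 1) volume)
    (R : ℝ) (hR : 0 < R)
    (dh : ℕ → ℝ → EuclideanSpace ℝ (Fin k))
    (dh₀ : ℝ → EuclideanSpace ℝ (Fin k))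
    (h : ℕ → ℝ → EuclideanSpace ℝ (Fin k))
    (h₀ : ℝ → EuclideanSpace ℝ (Fin k))
    (hdhmeas : ∀ n, AEStronglyMeasurable (dh n) (volume.restrict (Set.Icc 0 1)))
    (hdh₀meas : AEStronglyMeasurable dh₀ (volume.restrict (Set.Icc 0 1)))
    (hdhL2 : ∀ n, IntegrableOn (fun t => ‖dh n t‖ ^ 2) (Set.Icc 0 1) volume)
    (hdh₀L2 : IntegrableOn (fun t => ‖dh₀ t‖ ^ 2) (Set.Icc 0 1) volume)
    (hh : ∀ n, ∀ t ∈ Set.Icc (0 : ℝ) 1, h n t = ∫ s in (0 : ℝ)..t, dh n s)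
    (hh₀ : ∀ t ∈ Set.Icc (0 : ℝ) 1, h₀ t = ∫ s in (0 : ℝ)..t, dh₀ s)
    (henergy : ∀ n, (∫ t in (0 : ℝ)..1, ‖dh n t‖ ^ 2) ≤ 4 * R)
    (henergy₀ : (∫ t in (0 : ℝ)..1, ‖dh₀ t‖ ^ 2) ≤ 4 * R)
    (hconv : Filter.Tendsto (fun n => sSup ((fun t => ‖h n t - h₀ t‖) '' Set.Icc 0 1))
      Filter.atTop (nhds 0)) :
    Filter.Tendsto
      (fun n => sSup ((fun t => ‖∫ s in (0 : ℝ)..t, σ s (dh n s - dh₀ s)‖) '' Set.Icc 0 1))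
      Filter.atTop (nhds 0) :=
  control_integral_convergence_general σ hσmeas hσL2 R dh dh₀ h h₀ hdhmeas hdh₀meas hdhL2 hdh₀L2 hh
    hh₀ henergy henergy₀ hconv
end
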